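/- (The radiative energy–momentum is divergence-free.) Let F : Ω → ℝ be smooth with k^a ∂F/∂x^a = 0 on Ω (F is constant along the outgoing null rays, i.e. ∂F/∂r = 0). Then the field t^{ij} = F r^{−2} k^i k^j satisfies ∂t^{ij}/∂x^j = 0 on Ω for every i (sum over j). -/

import Mathlib

/-!
Write `w = x - z (u x)`, so that `k = w / r`. Differentiating the light-cone condition `w · w = 0`
(implicit function theorem in `(x, τ)`) gives `∂_h u = -k · h`. Hence along `k` the retarded time
is constant, `∂_k r = 1` and `∂_k k = 0`: the outgoing null rays are straight lines with affine
parameter `r`. Taking the trace of `∂_h k = (h + (k · h) v - (∂_h r) k) / r` and using `k · v = -1`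
gives `∂_j k^j = 2 / r`, so
`∂_j (F r⁻² k^i k^j) = k^i (r⁻² ∂_k F - 2 F r⁻³ + F r⁻² · 2 / r) + F r⁻² ∂_k k^i = 0`.
-/

open scoped BigOperators

noncomputable section

/-- The Minkowski metric η = diag(−1,1,1,1) on ℝ⁴. -/
def eta (i j : Fin 4) : ℝ := if i = j then (if i = 0 then -1 else 1) else 0

/-- Minkowski inner product a·b = η_{ij} a^i b^j. -/
def mdot (a b : Fin 4 → ℝ) : ℝ := ∑ i, ∑ j, eta i j * a i * b j

/-- Lowering an index with η : k_i = η_{ij} k^j. -/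
def lo (a : Fin 4 → ℝ) (i : Fin 4) : ℝ := ∑ j, eta i j * a j

open Filter Topology ContinuousLinearMap

theorem mdot_eq (a b : Fin 4 → ℝ) :
    mdot a b = -(a 0 * b 0) + a 1 * b 1 + a 2 * b 2 + a 3 * b 3 := by
  simp [mdot, eta, Fin.sum_univ_four]

theorem mdot_comm (a b : Fin 4 → ℝ) : mdot a b = mdot b a := by
  simp only [mdot_eq]; ring

theorem mdot_smul_left (c : ℝ) (a b : Fin 4 → ℝ) : mdot (c • a) b = c * mdot a b := by
  simp only [mdot_eq, Pi.smul_apply, smul_eq_mul]; ring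

@[simp]
theorem mdot_smul_right (c : ℝ) (a b : Fin 4 → ℝ) : mdot a (c • b) = c * mdot a b := by
  simp only [mdot_eq, Pi.smul_apply, smul_eq_mul]; ring

@[simp]
theorem mdot_neg_right (a b : Fin 4 → ℝ) : mdot a (-b) = -mdot a b := by
  simp only [mdot_eq, Pi.neg_apply]; ring

@[simp]
theorem mdot_zero_right (a : Fin 4 → ℝ) : mdot a 0 = 0 := by
  simp [mdot_eq]

theorem eq_zero_of_mdot_self_eq_zero {w : Fin 4 → ℝ} (hw : mdot w w = 0) (h0 : w 0 = 0) :
    w = 0 := by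
  rw [mdot_eq, h0] at hw
  obtain ⟨h1, h2, h3⟩ : w 1 = 0 ∧ w 2 = 0 ∧ w 3 = 0 := by
    refine ⟨?_, ?_, ?_⟩ <;> nlinarith [sq_nonneg (w 1), sq_nonneg (w 2), sq_nonneg (w 3)]
  ext i; fin_cases i <;> assumption

def mdotL (a : Fin 4 → ℝ) : (Fin 4 → ℝ) →L[ℝ] ℝ := ∑ i, lo a i • proj i

@[simp]
theorem mdotL_apply (a b : Fin 4 → ℝ) : mdotL a b = mdot a b := by
  simp [mdotL, lo, mdot_eq, eta, Fin.sum_univ_four]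

theorem HasFDerivAt.mdot {E : Type*} [NormedAddCommGroup E] [NormedSpace ℝ E]
    {f g : E → Fin 4 → ℝ} {f' g' : E →L[ℝ] Fin 4 → ℝ} {x : E}
    (hf : HasFDerivAt f f' x) (hg : HasFDerivAt g g' x) :
    HasFDerivAt (fun y => mdot (f y) (g y)) ((mdotL (f x)).comp g' + (mdotL (g x)).comp f') x := by
  have hfi := hasFDerivAt_pi'.mp hf
  have hgi := hasFDerivAt_pi'.mp hg
  simp only [mdot_eq]
  refine ((((hfi 0).mul (hgi 0)).neg.add ((hfi 1).mul (hgi 1))).add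
    ((hfi 2).mul (hgi 2))).add ((hfi 3).mul (hgi 3)) |>.congr_fderiv ?_
  ext h
  simp only [add_apply, neg_apply, smul_apply, comp_apply, proj_apply, smul_eq_mul, mdotL_apply,
    mdot_eq]
  ring

theorem HasStrictFDerivAt.hasFDerivAt_implicit {𝕜 : Type*} [NontriviallyNormedField 𝕜]
    {E₁ E₂ F : Type*} [NormedAddCommGroup E₁] [NormedSpace 𝕜 E₁] [CompleteSpace E₁]
    [NormedAddCommGroup E₂] [NormedSpace 𝕜 E₂] [CompleteSpace E₂]
    [NormedAddCommGroup F] [NormedSpace 𝕜 F] [CompleteSpace F]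
    {f : E₁ × E₂ → F} {f' : E₁ × E₂ →L[𝕜] F} {g : E₁ → E₂} {g' : E₁ →L[𝕜] E₂} {x : E₁}
    (hf : HasStrictFDerivAt f f' (x, g x)) (hf₂ : (f' ∘L inr 𝕜 E₁ E₂).IsInvertible)
    (hg : ∀ᶠ p in 𝓝 (x, g x), f p = f (x, g x) → g p.1 = p.2)
    (hg' : f' ∘L (ContinuousLinearMap.id 𝕜 E₁).prod g' = 0) :
    HasFDerivAt g g' x := by
  have hψg : hf.implicitFunctionOfProdDomain hf₂ =ᶠ[𝓝 x] g := by
    have hgraph : Tendsto (fun y => (y, hf.implicitFunctionOfProdDomain hf₂ y)) (𝓝 x)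
        (𝓝 (x, g x)) :=
      tendsto_id.prodMk_nhds (hf.tendsto_implicitFunctionOfProdDomain hf₂)
    filter_upwards [hf.eventually_apply_implicitFunctionOfProdDomain hf₂,
      hgraph.eventually hg] with y hy hy' using (hy' hy).symm
  refine ((hf.hasStrictFDerivAt_implicitFunctionOfProdDomain hf₂).hasFDerivAt.congr_of_eventuallyEq
    hψg.symm).congr_fderiv ?_
  ext h
  have hsplit := DFunLike.congr_fun hg' h
  rw [ContinuousLinearMap.comp_apply, ← f'.comp_inl_add_comp_inr] at hsplit
  simp only [ContinuousLinearMap.comp_apply, neg_apply] at hsplit ⊢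
  rw [← map_neg, hf₂.inverse_apply_eq]
  exact neg_eq_of_add_eq_zero_right hsplit

theorem ContinuousLinearMap.IsInvertible.of_apply_one_ne_zero {𝕜 : Type*}
    [NontriviallyNormedField 𝕜] {A : 𝕜 →L[𝕜] 𝕜} (hA : A 1 ≠ 0) : A.IsInvertible :=
  .of_inverse (g := (A 1)⁻¹ • ContinuousLinearMap.id 𝕜 𝕜) (ext_ring (by simp [hA]))
    (ext_ring (by simp [hA]))

theorem sum_apply_single_mul {n : ℕ} (L : (Fin n → ℝ) →L[ℝ] ℝ) (c : Fin n → ℝ) :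
    ∑ j, L (Pi.single j 1) * c j = L c := by
  simp_rw [mul_comm _ (c _), ← smul_eq_mul, ← map_smul, ← map_sum]
  congr 1
  ext i
  simp [Pi.single_apply]

def divergence {n : ℕ} (V : (Fin n → ℝ) → Fin n → ℝ) (x : Fin n → ℝ) : ℝ :=
  ∑ j, fderiv ℝ (fun y => V y j) x (Pi.single j 1)

section Divergence

variable {n : ℕ} {V : (Fin n → ℝ) → Fin n → ℝ} {x : Fin n → ℝ}

theorem divergence_eq_sum (hV : DifferentiableAt ℝ V x) :
    divergence V x = ∑ j, fderiv ℝ V x (Pi.single j 1) j := by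
  unfold divergence
  congr! 1 with j
  rw [((hasFDerivAt_pi'.mp hV.hasFDerivAt) j).fderiv, comp_apply, proj_apply]

theorem divergence_mul {g : (Fin n → ℝ) → ℝ} (hg : DifferentiableAt ℝ g x)
    (hV : DifferentiableAt ℝ V x) :
    divergence (fun y j => g y * V y j) x = fderiv ℝ g x (V x) + g x * divergence V x := by
  unfold divergence
  simp only [fderiv_fun_mul hg (differentiableAt_pi.mp hV _), add_apply, smul_apply,
    smul_eq_mul, Finset.sum_add_distrib, ← Finset.mul_sum, mul_comm (V x _),
    sum_apply_single_mul]
  ring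

end Divergence

structure RetardedCoordinates (z v : ℝ → Fin 4 → ℝ) (u r : (Fin 4 → ℝ) → ℝ)
    (k : (Fin 4 → ℝ) → Fin 4 → ℝ) : Prop where
  contDiff : ContDiff ℝ 2 z
  velocity : v = deriv z
  null : ∀ x, mdot (x - z (u x)) (x - z (u x)) = 0
  retarded : ∀ x, z (u x) 0 ≤ x 0
  unique : ∀ x τ, mdot (x - z τ) (x - z τ) = 0 → z τ 0 ≤ x 0 → τ = u x
  distance : ∀ x, r x = -mdot (v (u x)) (x - z (u x))
  direction : ∀ x, k x = (r x)⁻¹ • (x - z (u x))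

namespace RetardedCoordinates

variable {z v : ℝ → Fin 4 → ℝ} {u r : (Fin 4 → ℝ) → ℝ} {k : (Fin 4 → ℝ) → Fin 4 → ℝ}
  {x : Fin 4 → ℝ}

theorem hasDerivAt_worldline (h : RetardedCoordinates z v u r k) (τ : ℝ) :
    HasDerivAt z (v τ) τ := by
  rw [h.velocity]
  exact (h.contDiff.differentiable (by norm_num) τ).hasDerivAt

theorem hasDerivAt_velocity (h : RetardedCoordinates z v u r k) (τ : ℝ) :
    HasDerivAt v (deriv v τ) τ := by
  rw [h.velocity]
  exact (h.contDiff.differentiable_deriv_two τ).hasDerivAt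

theorem mdot_sub_worldline_velocity (h : RetardedCoordinates z v u r k) (x : Fin 4 → ℝ) :
    mdot (x - z (u x)) (v (u x)) = -r x := by
  rw [h.distance, mdot_comm, neg_neg]

theorem mdot_direction_self (h : RetardedCoordinates z v u r k) (x : Fin 4 → ℝ) :
    mdot (k x) (k x) = 0 := by
  rw [h.direction, mdot_smul_left, mdot_comm, mdot_smul_left, h.null, mul_zero, mul_zero]

theorem mdot_direction_velocity (h : RetardedCoordinates z v u r k) (hx : r x ≠ 0) :
    mdot (k x) (v (u x)) = -1 := by
  rw [h.direction, mdot_smul_left, h.mdot_sub_worldline_velocity]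
  field_simp

theorem worldline_time_lt (h : RetardedCoordinates z v u r k) (hx : r x ≠ 0) :
    z (u x) 0 < x 0 := by
  refine (h.retarded x).lt_of_ne fun heq => hx ?_
  have hw : x - z (u x) = 0 :=
    eq_zero_of_mdot_self_eq_zero (h.null x) (by rw [Pi.sub_apply, heq, sub_self])
  rw [h.distance, hw]
  simp [mdot]

theorem hasStrictFDerivAt_null_constraint (h : RetardedCoordinates z v u r k)
    (x : Fin 4 → ℝ) (τ : ℝ) :
    HasStrictFDerivAt (fun p : (Fin 4 → ℝ) × ℝ => mdot (p.1 - z p.2) (p.1 - z p.2))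
      ((2 : ℝ) • (mdotL (x - z τ)).comp (fst ℝ _ ℝ - (snd ℝ _ ℝ).smulRight (v τ))) (x, τ) := by
  have hw : HasFDerivAt (fun p : (Fin 4 → ℝ) × ℝ => p.1 - z p.2)
      (fst ℝ _ ℝ - (snd ℝ _ ℝ).smulRight (v τ)) (x, τ) :=
    hasFDerivAt_fst.sub ((h.hasDerivAt_worldline τ).hasFDerivAt.comp (x, τ) hasFDerivAt_snd
      |>.congr_fderiv (by ext <;> simp))
  have hz : ContDiff ℝ 1 z := h.contDiff.of_le (by norm_num)
  have hC : ContDiff ℝ 1 fun p : (Fin 4 → ℝ) × ℝ => mdot (p.1 - z p.2) (p.1 - z p.2) := by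
    unfold mdot; fun_prop
  exact hC.contDiffAt.hasStrictFDerivAt' ((hw.mdot hw).congr_fderiv (two_smul ℝ _).symm) one_ne_zero

theorem hasFDerivAt_retardedTime (h : RetardedCoordinates z v u r k) (hx : r x ≠ 0) :
    HasFDerivAt u (-mdotL (k x)) x := by
  refine (h.hasStrictFDerivAt_null_constraint x (u x)).hasFDerivAt_implicit ?_ ?_ ?_
  · -- the `τ`-derivative of the constraint is `2 r`
    exact .of_apply_one_ne_zero (by simpa [h.mdot_sub_worldline_velocity] using hx)
  · -- near `(x, u x)` the worldline point stays strictly in the past, so `unique` applies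
    have hcont : ContinuousAt (fun p : (Fin 4 → ℝ) × ℝ => p.1 0 - z p.2 0) (x, u x) := by
      have hz : Continuous z := h.contDiff.continuous
      fun_prop
    filter_upwards [hcont.eventually (lt_mem_nhds (sub_pos.2 (h.worldline_time_lt hx)))]
      with p hp hnull
    exact (h.unique p.1 p.2 (hnull.trans (h.null x)) (sub_pos.1 hp).le).symm
  · ext y
    simp only [comp_sub, smul_comp, sub_comp, smul_apply, sub_apply, comp_apply, prod_apply,
      id_apply, neg_apply, coe_fst', coe_snd', smulRight_apply, zero_apply, neg_smul, smul_eq_mul,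
      mdotL_apply, h.direction, mdot_smul_left, mdot_neg_right, mdot_smul_right,
      h.mdot_sub_worldline_velocity, mul_neg, neg_neg, mul_eq_zero, OfNat.ofNat_ne_zero, false_or]
    field_simp
    ring

theorem hasFDerivAt_sub_worldline (h : RetardedCoordinates z v u r k) (hx : r x ≠ 0) :
    HasFDerivAt (fun y => y - z (u y))
      (ContinuousLinearMap.id ℝ _ + (mdotL (k x)).smulRight (v (u x))) x :=
  (hasFDerivAt_id x).sub ((h.hasDerivAt_worldline (u x)).hasFDerivAt.comp x
    (h.hasFDerivAt_retardedTime hx)) |>.congr_fderiv (by ext; simp)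

theorem hasFDerivAt_retardedDistance (h : RetardedCoordinates z v u r k) (hx : r x ≠ 0) :
    HasFDerivAt r ((mdot (deriv v (u x)) (x - z (u x)) - mdot (v (u x)) (v (u x))) • mdotL (k x)
      - mdotL (v (u x))) x := by
  have hvu := (h.hasDerivAt_velocity (u x)).hasFDerivAt.comp x (h.hasFDerivAt_retardedTime hx)
  refine HasFDerivAt.congr_of_eventuallyEq ?_ (.of_forall h.distance)
  refine (hvu.mdot (h.hasFDerivAt_sub_worldline hx)).neg.congr_fderiv ?_
  ext y
  simp only [Function.comp_apply, comp_add, comp_id, comp_neg, neg_add_rev, neg_neg, add_apply,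
    sub_apply, smul_apply, neg_apply, comp_apply, smulRight_apply, toSpanSingleton_apply, map_smul,
    smul_eq_mul, mdotL_apply, mdot_comm (deriv v (u x))]
  ring

theorem hasFDerivAt_direction (h : RetardedCoordinates z v u r k) (hx : r x ≠ 0) :
    HasFDerivAt k ((r x)⁻¹ • (ContinuousLinearMap.id ℝ _ + (mdotL (k x)).smulRight (v (u x))
      - (fderiv ℝ r x).smulRight (k x))) x := by
  have hr := h.hasFDerivAt_retardedDistance hx
  refine HasFDerivAt.congr_of_eventuallyEq ?_ (.of_forall h.direction)
  refine (((hasDerivAt_inv hx).comp_hasFDerivAt x hr).smul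
    (h.hasFDerivAt_sub_worldline hx)).congr_fderiv ?_
  ext y i
  simp only [Function.comp_apply, smul_add, neg_smul, add_apply, sub_apply, smul_apply, neg_apply,
    id_apply, smulRight_apply, smul_eq_mul, Pi.add_apply, Pi.sub_apply, Pi.smul_apply, Pi.neg_apply,
    mdotL_apply, hr.fderiv, h.direction]
  field_simp
  ring

theorem fderiv_retardedDistance_direction (h : RetardedCoordinates z v u r k) (hx : r x ≠ 0) :
    fderiv ℝ r x (k x) = 1 := by
  simp [(h.hasFDerivAt_retardedDistance hx).fderiv, h.mdot_direction_self, mdot_comm (v _),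
    h.mdot_direction_velocity hx]

theorem fderiv_direction_direction (h : RetardedCoordinates z v u r k) (hx : r x ≠ 0) :
    fderiv ℝ k x (k x) = 0 := by
  simp [(h.hasFDerivAt_direction hx).fderiv, h.mdot_direction_self,
    h.fderiv_retardedDistance_direction hx]

theorem divergence_direction (h : RetardedCoordinates z v u r k) (hx : r x ≠ 0) :
    divergence k x = 2 / r x := by
  have hk := h.hasFDerivAt_direction hx
  calc divergence k x = ∑ j, fderiv ℝ k x (Pi.single j 1) j := divergence_eq_sum hk.differentiableAt
    _ = (r x)⁻¹ * ∑ j, ((Pi.single j 1 : Fin 4 → ℝ) j + mdotL (k x) (Pi.single j 1) * v (u x) j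
          - fderiv ℝ r x (Pi.single j 1) * k x j) := by
      rw [Finset.mul_sum]
      simp [hk.fderiv]
    _ = (r x)⁻¹ * (4 + mdot (k x) (v (u x)) - fderiv ℝ r x (k x)) := by
      rw [Finset.sum_sub_distrib, Finset.sum_add_distrib, sum_apply_single_mul,
        sum_apply_single_mul, mdotL_apply]
      simp
    _ = 2 / r x := by
      rw [h.mdot_direction_velocity hx, h.fderiv_retardedDistance_direction hx]
      ring

theorem divergence_radiative (h : RetardedCoordinates z v u r k) (hx : r x ≠ 0)
    {F : (Fin 4 → ℝ) → ℝ} (hF : DifferentiableAt ℝ F x) (hFk : fderiv ℝ F x (k x) = 0)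
    (i : Fin 4) : divergence (fun y j => F y * (r y)⁻¹ ^ 2 * k y i * k y j) x = 0 := by
  have hr := (h.hasFDerivAt_retardedDistance hx).differentiableAt
  have hk := (h.hasFDerivAt_direction hx).differentiableAt
  have hG : HasFDerivAt (fun y => F y * (r y)⁻¹ ^ 2 * k y i) _ x :=
    (hF.hasFDerivAt.mul (((hasDerivAt_inv hx).comp_hasFDerivAt x hr.hasFDerivAt).pow 2)).mul
      (hasFDerivAt_pi'.mp hk.hasFDerivAt i)
  have hGk :
      fderiv ℝ (fun y => F y * (r y)⁻¹ ^ 2 * k y i) x (k x) = -2 * F x * k x i / r x ^ 3 := by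
    simp only [hG.fderiv, Function.comp_apply, Pi.mul_apply, add_apply, smul_apply,
      comp_apply, proj_apply, Pi.zero_apply, smul_eq_mul, Nat.add_one_sub_one, pow_one,
      nsmul_eq_mul, Nat.cast_ofNat, hFk,
      h.fderiv_direction_direction hx, h.fderiv_retardedDistance_direction hx]
    field_simp
    ring
  rw [divergence_mul hG.differentiableAt hk, hGk, h.divergence_direction hx]
  field_simp
  ring

end RetardedCoordinates

theorem radiative_pseudotensor_divergence_free_general
    (z : ℝ → Fin 4 → ℝ) (hz : ContDiff ℝ (⊤ : ℕ∞) z)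
    (v : ℝ → Fin 4 → ℝ) (hv : ∀ τ i, v τ i = deriv (fun t => z t i) τ)
    (u : (Fin 4 → ℝ) → ℝ)
    (hu : ∀ x, mdot (x - z (u x)) (x - z (u x)) = 0 ∧ z (u x) 0 ≤ x 0)
    (huniq : ∀ x τ, mdot (x - z τ) (x - z τ) = 0 → z τ 0 ≤ x 0 → τ = u x)
    (r : (Fin 4 → ℝ) → ℝ)
    (hr : ∀ x, r x = -mdot (v (u x)) (x - z (u x)))
    (k : (Fin 4 → ℝ) → Fin 4 → ℝ)
    (hk : ∀ x, k x = (r x)⁻¹ • (x - z (u x)))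
    (F : (Fin 4 → ℝ) → ℝ)
    (hF : ContDiffOn ℝ (⊤ : ℕ∞) F {x | 0 < r x})
    (hFray : ∀ x ∈ {x : Fin 4 → ℝ | 0 < r x},
      ∑ a, k x a * fderiv ℝ F x (Pi.single a 1) = 0) :
    ∀ x ∈ {x : Fin 4 → ℝ | 0 < r x}, ∀ i : Fin 4,
      ∑ j, fderiv ℝ (fun y => F y * (r y)⁻¹ ^ 2 * k y i * k y j) x
        (Pi.single j 1) = 0 := by
  have hcoord : RetardedCoordinates z v u r k :=
    { contDiff := hz.of_le (by norm_cast)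
      velocity := funext fun τ => by
        rw [deriv_pi fun i => differentiable_pi.mp (hz.differentiable (by simp)) i τ]
        exact funext (hv τ)
      null := fun x => (hu x).1
      retarded := fun x => (hu x).2
      unique := huniq
      distance := hr
      direction := hk }
  intro x hx i
  have hr0 : r x ≠ 0 := ne_of_gt hx
  have hΩ : {x | 0 < r x} ∈ 𝓝 x :=
    (hcoord.hasFDerivAt_retardedDistance hr0).continuousAt.preimage_mem_nhds (Ioi_mem_nhds hx)
  have hFk : fderiv ℝ F x (k x) = 0 := by
    rw [← sum_apply_single_mul]
    simpa only [mul_comm] using hFray x hx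
  exact hcoord.divergence_radiative hr0 ((hF.contDiffAt hΩ).differentiableAt (by simp)) hFk i

/-- The radiative energy–momentum `t^{ij} = F r⁻² k^i k^j`, with `F` constant
along the outgoing null rays (`k^a ∂_a F = 0`), is divergence-free on
Ω = {x | r x > 0}. -/
theorem radiative_pseudotensor_divergence_free
    (z : ℝ → Fin 4 → ℝ) (hz : ContDiff ℝ (⊤ : ℕ∞) z)
    (v : ℝ → Fin 4 → ℝ) (hv : ∀ τ i, v τ i = deriv (fun t => z t i) τ)
    (hunit : ∀ τ, mdot (v τ) (v τ) = -1)
    (hfut : ∀ τ, 0 < v τ 0)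
    (u : (Fin 4 → ℝ) → ℝ)
    (hu : ∀ x, mdot (x - z (u x)) (x - z (u x)) = 0 ∧ z (u x) 0 ≤ x 0)
    (huniq : ∀ x τ, mdot (x - z τ) (x - z τ) = 0 → z τ 0 ≤ x 0 → τ = u x)
    (r : (Fin 4 → ℝ) → ℝ)
    (hr : ∀ x, r x = -mdot (v (u x)) (x - z (u x)))
    (k : (Fin 4 → ℝ) → Fin 4 → ℝ)
    (hk : ∀ x, k x = (r x)⁻¹ • (x - z (u x)))
    (F : (Fin 4 → ℝ) → ℝ)
    (hF : ContDiffOn ℝ (⊤ : ℕ∞) F {x | 0 < r x})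
    (hFray : ∀ x ∈ {x : Fin 4 → ℝ | 0 < r x},
      ∑ a, k x a * fderiv ℝ F x (Pi.single a 1) = 0) :
    ∀ x ∈ {x : Fin 4 → ℝ | 0 < r x}, ∀ i : Fin 4,
      ∑ j, fderiv ℝ (fun y => F y * (r y)⁻¹ ^ 2 * k y i * k y j) x
        (Pi.single j 1) = 0 :=
  radiative_pseudotensor_divergence_free_general z hz v hv u hu huniq r hr k hk F hF hFray
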